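/- Let p ∈ (1,2], δ > 0 and A ≥ 1, set ω := ω_{p,δ}, a^A(t) := (ω^A)'(t)/t (a^A(0) := δ^{p−2}), F(P) := (δ+|P^sym|)^{(p−2)/2} P^sym and F^A(P) := √(a^A(|P^sym|)) P^sym for P ∈ ℝ^{3×3}. Then there exist constants 0 < c ≤ C depending only on p such that for all P ∈ ℝ^{3×3}: c·ω^A(|P^sym|) ≤ |F^A(P)|² ≤ C·ω^A(|P^sym|), and c·|F(P)|² ≤ |F^A(P)|². -/

import Mathlib

open Real Set MeasureTheory Filter Matrix

noncomputable section

/-- The N-function `omega_{p,delta}(t) = int_0^t (delta+s)^(p-2) s ds`. -/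
def omg (p δ : ℝ) (t : ℝ) : ℝ := ∫ s in (0:ℝ)..t, (δ + s) ^ (p - 2) * s

/-- The `A`-approximation of a function `φ`: it equals `φ` on `[0,A]` and is the
second-order Taylor polynomial of `φ` at `A` for `t > A`. -/
def approxA (φ : ℝ → ℝ) (A : ℝ) (t : ℝ) : ℝ :=
  if t ≤ A then φ t
  else (1/2) * deriv (deriv φ) A * t ^ 2 + (deriv φ A - deriv (deriv φ) A * A) * t
    + (φ A - deriv φ A * A + (1/2) * deriv (deriv φ) A * A ^ 2)

/-- `φ` is a regular N-function: continuous, convex, positive for `t > 0`,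
`φ(t)/t → 0` as `t → 0⁺`, `φ(t)/t → ∞` as `t → ∞`, `C¹` on `[0,∞)`, `C²` on `(0,∞)`,
with `φ'' > 0` on `(0,∞)`. -/
structure IsRegularNFunction (φ : ℝ → ℝ) : Prop where
  continuousOn : ContinuousOn φ (Set.Ici 0)
  convexOn : ConvexOn ℝ (Set.Ici 0) φ
  pos : ∀ t : ℝ, 0 < t → 0 < φ t
  tendsto_zero : Filter.Tendsto (fun t => φ t / t) (nhdsWithin 0 (Set.Ioi 0)) (nhds 0)
  tendsto_atTop : Filter.Tendsto (fun t => φ t / t) Filter.atTop Filter.atTop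
  diffAt : ∀ t : ℝ, 0 < t → DifferentiableAt ℝ φ t
  deriv_continuousOn : ContinuousOn (deriv φ) (Set.Ici 0)
  diffAt2 : ∀ t : ℝ, 0 < t → DifferentiableAt ℝ (deriv φ) t
  deriv2_continuousOn : ContinuousOn (deriv (deriv φ)) (Set.Ioi 0)
  deriv2_pos : ∀ t : ℝ, 0 < t → 0 < deriv (deriv φ) t

/-- `φ` is a balanced N-function with characteristics `(γ₁, γ₂)`:
`γ₁ φ'(t) ≤ t φ''(t) ≤ γ₂ φ'(t)` for all `t > 0`. -/
structure IsBalanced (φ : ℝ → ℝ) (γ₁ γ₂ : ℝ) : Prop where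
  regular : IsRegularNFunction φ
  gamma1_mem : γ₁ ∈ Set.Ioc (0:ℝ) 1
  gamma2_ge : 1 ≤ γ₂
  lower : ∀ t : ℝ, 0 < t → γ₁ * deriv φ t ≤ t * deriv (deriv φ) t
  upper : ∀ t : ℝ, 0 < t → t * deriv (deriv φ) t ≤ γ₂ * deriv φ t

/-- `ψ` satisfies the Δ₂-condition with constant `K`. -/
def SatisfiesDelta2 (ψ : ℝ → ℝ) (K : ℝ) : Prop :=
  2 ≤ K ∧ ∀ t : ℝ, 0 ≤ t → ψ (2 * t) ≤ K * ψ t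

/-- The complementary N-function `φ*(t) = ∫₀ᵗ (φ')⁻¹(s) ds`, where `(φ')⁻¹` is the
inverse on `[0,∞)` of the (strictly increasing) derivative `φ'`. -/
def conj (φ : ℝ → ℝ) (t : ℝ) : ℝ :=
  ∫ s in (0:ℝ)..t, Function.invFunOn (deriv φ) (Set.Ici 0) s

abbrev Mat3 := Matrix (Fin 3) (Fin 3) ℝ

/-- The symmetric part `P^sym = (P + Pᵀ)/2`. -/
def symPart (P : Mat3) : Mat3 := (2:ℝ)⁻¹ • (P + Pᵀ)

/-- Frobenius norm of a 3×3 matrix. -/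
def frob (P : Mat3) : ℝ := Real.sqrt (∑ i, ∑ j, (P i j) ^ 2)

/-- Scalar product of matrices `P·Q = Σ_{ij} P_{ij} Q_{ij}`. -/
def dot3 (P Q : Mat3) : ℝ := ∑ i, ∑ j, P i j * Q i j

attribute [local instance] Matrix.frobeniusNormedAddCommGroup Matrix.frobeniusNormedSpace

/-- `a^A(t) = (ω^A)'(t)/t` for `t > 0`, with `a^A(0) = δ^{p−2}`. -/
def aA (p δ A : ℝ) (t : ℝ) : ℝ :=
  if t = 0 then δ ^ (p - 2) else deriv (approxA (omg p δ) A) t / t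

/-- `F(P) = (δ+|P^sym|)^{(p−2)/2} P^sym`. -/
def Fp (p δ : ℝ) (P : Mat3) : Mat3 :=
  ((δ + frob (symPart P)) ^ ((p - 2) / 2)) • symPart P

/-- `F^A(P) = √(a^A(|P^sym|)) P^sym`. -/
def FA (p δ A : ℝ) (P : Mat3) : Mat3 :=
  Real.sqrt (aA p δ A (frob (symPart P))) • symPart P

/-!
Write `t = |P^sym|` and `ω = ω_{p,δ}`, so that `|F^A(P)|² = (ω^A)'(t) t` and
`|F(P)|² = (δ+t)^{p-2} t²`. Since `ω'(t) = (δ+t)^{p-2} t` is increasing while `(δ+t)^{p-2}`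
is decreasing, `ω ≤ t ω' ≤ 2 ω`; moreover `(p-1) ω' ≤ t ω'' ≤ ω'`. Beyond `A`, `ω^A` is the
quadratic Taylor polynomial of `ω` at `A`, and these inequalities at the single point `A` give
`ω^A ≤ t (ω^A)' ≤ 2 ω^A` and `(p-1)(δ+t)^{p-2} t ≤ (ω^A)'(t)` there as well. Hence `c = p - 1`
and `C = 2` work.
-/

section approxA

variable {φ : ℝ → ℝ} {A t : ℝ}

def quadTaylor (φ : ℝ → ℝ) (A s : ℝ) : ℝ :=
  φ A + deriv φ A * (s - A) + deriv (deriv φ) A / 2 * (s - A) ^ 2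

lemma approxA_of_le (h : t ≤ A) : approxA φ A t = φ t := if_pos h

lemma approxA_of_lt (h : A < t) : approxA φ A t = quadTaylor φ A t := by
  rw [approxA, if_neg h.not_ge, quadTaylor]
  ring

lemma hasDerivAt_quadTaylor :
    HasDerivAt (quadTaylor φ A) (deriv φ A + deriv (deriv φ) A * (t - A)) t := by
  have hv : HasDerivAt (fun s => s - A) 1 t := (hasDerivAt_id t).sub_const A
  exact (((hv.const_mul (deriv φ A)).const_add (φ A)).add
    ((hv.pow 2).const_mul (deriv (deriv φ) A / 2))).congr_deriv (by ring)

lemma hasDerivAt_approxA_of_lt (h : A < t) :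
    HasDerivAt (approxA φ A) (deriv φ A + deriv (deriv φ) A * (t - A)) t :=
  hasDerivAt_quadTaylor.congr_of_eventuallyEq <|
    eventually_of_mem (Ioi_mem_nhds h) fun _ hs => approxA_of_lt hs

lemma hasDerivAt_approxA_of_le (h : t ≤ A) (hφ : DifferentiableAt ℝ φ t) :
    HasDerivAt (approxA φ A) (deriv φ t) t := by
  rcases h.lt_or_eq with h | rfl
  · exact hφ.hasDerivAt.congr_of_eventuallyEq <|
      eventually_of_mem (Iio_mem_nhds h) fun _ hs => approxA_of_le hs.le
  · rw [← hasDerivWithinAt_univ, ← Iic_union_Ici]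
    refine .union (hφ.hasDerivAt.hasDerivWithinAt.congr (fun _ => approxA_of_le)
      (approxA_of_le le_rfl)) ?_
    have hq : HasDerivWithinAt (quadTaylor φ t) (deriv φ t) (Ici t) t := by
      simpa using (hasDerivAt_quadTaylor (φ := φ) (A := t) (t := t)).hasDerivWithinAt
    refine hq.congr (fun s hs => ?_) (by simp [approxA_of_le, quadTaylor])
    rcases (mem_Ici.mp hs).lt_or_eq with hs | rfl
    · exact approxA_of_lt hs
    · simp [approxA_of_le, quadTaylor]

lemma approxA_le_deriv_mul_of_lt (hA : 0 ≤ A) (h : A < t) (h₁ : φ A ≤ deriv φ A * A)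
    (h₂ : 0 ≤ deriv (deriv φ) A) :
    approxA φ A t ≤ deriv (approxA φ A) t * t := by
  rw [(hasDerivAt_approxA_of_lt h).deriv, approxA_of_lt h, quadTaylor]
  have hv : 0 ≤ t - A := by linarith
  nlinarith [mul_nonneg (mul_nonneg h₂ hA) hv, mul_nonneg h₂ (sq_nonneg (t - A))]

lemma deriv_mul_le_two_approxA_of_lt (h : A < t) (h₁ : deriv φ A * A ≤ 2 * φ A)
    (h₂ : A * deriv (deriv φ) A ≤ deriv φ A) :
    deriv (approxA φ A) t * t ≤ 2 * approxA φ A t := by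
  rw [(hasDerivAt_approxA_of_lt h).deriv, approxA_of_lt h, quadTaylor]
  have hv : 0 ≤ t - A := by linarith
  nlinarith [mul_nonneg (sub_nonneg.mpr h₂) hv]

lemma mul_le_mul_deriv_approxA_of_lt {γ : ℝ} (hγ : γ ≤ 1) (hA : 0 ≤ A) (h : A < t)
    (h₀ : 0 ≤ deriv φ A) (h₁ : γ * deriv φ A ≤ A * deriv (deriv φ) A) :
    γ * deriv φ A * t ≤ A * deriv (approxA φ A) t := by
  rw [(hasDerivAt_approxA_of_lt h).deriv]
  have hv : 0 ≤ t - A := by linarith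
  nlinarith [mul_le_mul_of_nonneg_right h₁ hv,
    mul_nonneg (mul_nonneg (sub_nonneg.mpr hγ) h₀) hA]

end approxA

section omg

variable {p δ t : ℝ}

lemma continuousOn_omg_integrand :
    ContinuousOn (fun s : ℝ => (δ + s) ^ (p - 2) * s) (Ioi (-δ)) := fun s hs =>
  ((continuousAt_id.const_add δ).rpow_const
    (Or.inl (by simp only [mem_Ioi] at hs; simp only [id]; linarith))).mul
    continuousAt_id |>.continuousWithinAt

lemma intervalIntegrable_omg_integrand (hδ : 0 < δ) (ht : -δ < t) :
    IntervalIntegrable (fun s : ℝ => (δ + s) ^ (p - 2) * s) volume 0 t :=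
  (continuousOn_omg_integrand.mono <|
    ordConnected_Ioi.uIcc_subset (by simpa using hδ) ht).intervalIntegrable

lemma hasDerivAt_omg (hδ : 0 < δ) (ht : -δ < t) :
    HasDerivAt (omg p δ) ((δ + t) ^ (p - 2) * t) t :=
  intervalIntegral.integral_hasDerivAt_right (intervalIntegrable_omg_integrand hδ ht)
    (continuousOn_omg_integrand.stronglyMeasurableAtFilter isOpen_Ioi t ht)
    (continuousOn_omg_integrand.continuousAt (Ioi_mem_nhds ht))

lemma deriv_deriv_omg (hδ : 0 < δ) (ht : -δ < t) :
    deriv (deriv (omg p δ)) t = (δ + t) ^ (p - 3) * ((p - 1) * t + δ) := by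
  have hpos : 0 < δ + t := by linarith
  have hderiv : deriv (omg p δ) =ᶠ[nhds t] fun s => (δ + s) ^ (p - 2) * s :=
    eventually_of_mem (Ioi_mem_nhds ht) fun s hs => (hasDerivAt_omg hδ hs).deriv
  have hbase : HasDerivAt (fun s => δ + s) 1 t := (hasDerivAt_id' t).const_add δ
  have hd : HasDerivAt (fun s => (δ + s) ^ (p - 2) * s)
      (1 * (p - 2) * (δ + t) ^ (p - 2 - 1) * t + (δ + t) ^ (p - 2) * 1) t :=
    (hbase.rpow_const (Or.inl hpos.ne')).mul (hasDerivAt_id' t)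
  rw [hderiv.deriv_eq, hd.deriv, show p - 2 - 1 = p - 3 by ring,
    show p - 2 = p - 3 + 1 by ring, rpow_add_one hpos.ne']
  ring

lemma monotoneOn_omg_integrand (hp : 1 < p) (hδ : 0 < δ) :
    MonotoneOn (fun s : ℝ => (δ + s) ^ (p - 2) * s) (Ici 0) := by
  intro s hs t ht hst
  have hs' : 0 < δ + s := by simp only [mem_Ici] at hs; linarith
  have ht' : 0 < δ + t := by linarith
  have key : ∀ {u : ℝ}, 0 < δ + u → (δ + u) ^ (p - 2) * u = (δ + u) ^ (p - 1) * (u / (δ + u)) :=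
    fun hu => by rw [show p - 1 = p - 2 + 1 by ring, rpow_add_one hu.ne']; field_simp
  simp only [key hs', key ht']
  have hs0 : (0 : ℝ) ≤ s := hs
  refine mul_le_mul (rpow_le_rpow hs'.le (by linarith) (by linarith)) ?_ (by positivity)
    (by positivity)
  rw [div_le_div_iff₀ hs' ht']
  nlinarith

lemma omg_le_deriv_mul (hp : 1 < p) (hδ : 0 < δ) (ht : 0 ≤ t) :
    omg p δ t ≤ (δ + t) ^ (p - 2) * t * t := by
  have h := intervalIntegral.integral_mono_on ht
    (intervalIntegrable_omg_integrand hδ (by linarith)) intervalIntegrable_const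
    fun s hs => monotoneOn_omg_integrand hp hδ hs.1 (mem_Ici.mpr ht) hs.2
  rw [intervalIntegral.integral_const, smul_eq_mul, sub_zero] at h
  unfold omg
  linarith

lemma deriv_mul_le_two_omg (hp : p ≤ 2) (hδ : 0 < δ) (ht : 0 ≤ t) :
    (δ + t) ^ (p - 2) * t * t ≤ 2 * omg p δ t := by
  have h := intervalIntegral.integral_mono_on (f := fun s => (δ + t) ^ (p - 2) * s) ht
    ((continuous_const.mul continuous_id).intervalIntegrable 0 t)
    (intervalIntegrable_omg_integrand hδ (by linarith))
    fun s hs => mul_le_mul_of_nonneg_right (rpow_le_rpow_of_nonpos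
      (by linarith [hs.1]) (by linarith [hs.2]) (by linarith : p - 2 ≤ 0)) hs.1
  rw [intervalIntegral.integral_const_mul, integral_id] at h
  unfold omg
  linarith

lemma deriv_omg (hδ : 0 < δ) (ht : -δ < t) : deriv (omg p δ) t = (δ + t) ^ (p - 2) * t :=
  (hasDerivAt_omg hδ ht).deriv

lemma deriv_omg_eq_rpow_mul (hδ : 0 < δ) (ht : 0 ≤ t) :
    deriv (omg p δ) t = (δ + t) ^ (p - 3) * ((δ + t) * t) := by
  rw [deriv_omg hδ (by linarith), show p - 2 = p - 3 + 1 by ring, rpow_add_one (by linarith)]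
  ring

lemma deriv_deriv_omg_nonneg (hp : 1 < p) (hδ : 0 < δ) (ht : 0 ≤ t) :
    0 ≤ deriv (deriv (omg p δ)) t := by
  rw [deriv_deriv_omg hδ (by linarith)]
  exact mul_nonneg (rpow_nonneg (by linarith) _) (by nlinarith)

lemma sub_one_mul_deriv_omg_le (hp : p ≤ 2) (hδ : 0 < δ) (ht : 0 ≤ t) :
    (p - 1) * deriv (omg p δ) t ≤ t * deriv (deriv (omg p δ)) t := by
  rw [deriv_omg_eq_rpow_mul hδ ht, deriv_deriv_omg hδ (by linarith)]
  have : 0 ≤ (δ + t) ^ (p - 3) := rpow_nonneg (by linarith) _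
  nlinarith [mul_nonneg this (mul_nonneg hδ.le (sub_nonneg.mpr hp))]

lemma mul_deriv_deriv_omg_le (hp : p ≤ 2) (hδ : 0 < δ) (ht : 0 ≤ t) :
    t * deriv (deriv (omg p δ)) t ≤ deriv (omg p δ) t := by
  rw [deriv_omg_eq_rpow_mul hδ ht, deriv_deriv_omg hδ (by linarith)]
  have : 0 ≤ (δ + t) ^ (p - 3) * t := mul_nonneg (rpow_nonneg (by linarith) _) ht
  nlinarith [mul_nonneg this (mul_nonneg ht (sub_nonneg.mpr hp))]

end omg

section approxOmg

variable {p δ A t : ℝ}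

lemma approxA_omg_of_le (hδ : 0 < δ) (ht : 0 ≤ t) (htA : t ≤ A) :
    approxA (omg p δ) A t = omg p δ t ∧
      deriv (approxA (omg p δ) A) t = (δ + t) ^ (p - 2) * t := by
  refine ⟨approxA_of_le htA, ?_⟩
  rw [(hasDerivAt_approxA_of_le htA (hasDerivAt_omg hδ (by linarith)).differentiableAt).deriv,
    deriv_omg hδ (by linarith)]

lemma approxA_omg_le_deriv_mul (hp : 1 < p) (hδ : 0 < δ) (hA : 0 < A) (ht : 0 ≤ t) :
    approxA (omg p δ) A t ≤ deriv (approxA (omg p δ) A) t * t := by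
  rcases le_or_gt t A with htA | htA
  · obtain ⟨hval, hderiv⟩ := approxA_omg_of_le hδ ht htA
    rw [hval, hderiv]
    exact omg_le_deriv_mul hp hδ ht
  · refine approxA_le_deriv_mul_of_lt hA.le htA ?_ (deriv_deriv_omg_nonneg hp hδ hA.le)
    rw [deriv_omg hδ (by linarith)]
    exact omg_le_deriv_mul hp hδ hA.le

lemma deriv_mul_le_two_approxA_omg (hp : p ≤ 2) (hδ : 0 < δ) (hA : 0 < A) (ht : 0 ≤ t) :
    deriv (approxA (omg p δ) A) t * t ≤ 2 * approxA (omg p δ) A t := by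
  rcases le_or_gt t A with htA | htA
  · obtain ⟨hval, hderiv⟩ := approxA_omg_of_le hδ ht htA
    rw [hval, hderiv]
    exact deriv_mul_le_two_omg hp hδ ht
  · refine deriv_mul_le_two_approxA_of_lt htA ?_ (mul_deriv_deriv_omg_le hp hδ hA.le)
    rw [deriv_omg hδ (by linarith)]
    exact deriv_mul_le_two_omg hp hδ hA.le

lemma sub_one_mul_le_deriv_approxA_omg (hp : p ∈ Ioc 1 2) (hδ : 0 < δ) (hA : 0 < A)
    (ht : 0 ≤ t) :
    (p - 1) * ((δ + t) ^ (p - 2) * t) ≤ deriv (approxA (omg p δ) A) t := by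
  have hX : 0 ≤ (δ + t) ^ (p - 2) * t := mul_nonneg (rpow_nonneg (by linarith) _) ht
  rcases le_or_gt t A with htA | htA
  · rw [(approxA_omg_of_le hδ ht htA).2]
    nlinarith [hp.2]
  · have h := mul_le_mul_deriv_approxA_of_lt (by linarith [hp.2]) hA.le htA
      (by rw [deriv_omg hδ (by linarith)]; positivity) (sub_one_mul_deriv_omg_le hp.2 hδ hA.le)
    rw [deriv_omg hδ (by linarith)] at h
    have hmono : (δ + t) ^ (p - 2) ≤ (δ + A) ^ (p - 2) :=
      rpow_le_rpow_of_nonpos (by linarith) (by linarith) (by linarith [hp.2])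
    have hp1 : 0 ≤ p - 1 := by linarith [hp.1]
    nlinarith [mul_le_mul_of_nonneg_left (mul_le_mul_of_nonneg_right hmono ht) hp1]

end approxOmg

lemma frob_sq (P : Mat3) : frob P ^ 2 = ∑ i, ∑ j, P i j ^ 2 :=
  sq_sqrt (by positivity)

lemma frob_smul_sq (c : ℝ) (P : Mat3) : frob (c • P) ^ 2 = c ^ 2 * frob P ^ 2 := by
  simp only [frob_sq, Finset.mul_sum, Matrix.smul_apply, smul_eq_mul, mul_pow]

lemma frob_nonneg (P : Mat3) : 0 ≤ frob P := sqrt_nonneg _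

lemma frob_FA_sq {p δ A : ℝ} (hp : p ∈ Ioc 1 2) (hδ : 0 < δ) (hA : 0 < A) (P : Mat3) :
    frob (FA p δ A P) ^ 2 =
      deriv (approxA (omg p δ) A) (frob (symPart P)) * frob (symPart P) := by
  rw [FA, frob_smul_sq]
  rcases (frob_nonneg (symPart P)).lt_or_eq with ht | ht
  · have hD : 0 ≤ deriv (approxA (omg p δ) A) (frob (symPart P)) :=
      (mul_nonneg (by linarith [hp.1]) (by positivity)).trans
        (sub_one_mul_le_deriv_approxA_omg hp hδ hA ht.le)
    rw [sq_sqrt (by rw [aA, if_neg ht.ne']; positivity), aA, if_neg ht.ne']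
    field_simp
  · simp [← ht]

lemma frob_Fp_sq {p δ : ℝ} (hδ : 0 ≤ δ) (P : Mat3) :
    frob (Fp p δ P) ^ 2 = (δ + frob (symPart P)) ^ (p - 2) * frob (symPart P) ^ 2 := by
  rw [Fp, frob_smul_sq, ← rpow_mul_natCast (add_nonneg hδ (frob_nonneg _))]
  norm_num

/-- For `p ∈ (1,2]` there are constants `0 < c ≤ C` depending only on
`p` such that for all `δ > 0`, `A ≥ 1` and `P ∈ ℝ^{3×3}`:
`c ω^A(|P^sym|) ≤ |F^A(P)|² ≤ C ω^A(|P^sym|)` and `c |F(P)|² ≤ |F^A(P)|²`. -/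
theorem stmt8 (p : ℝ) (hp : p ∈ Set.Ioc (1:ℝ) 2) :
    ∃ c C : ℝ, 0 < c ∧ c ≤ C ∧
      ∀ δ A : ℝ, 0 < δ → 1 ≤ A → ∀ P : Mat3,
        c * approxA (omg p δ) A (frob (symPart P)) ≤ frob (FA p δ A P) ^ 2 ∧
        frob (FA p δ A P) ^ 2 ≤ C * approxA (omg p δ) A (frob (symPart P)) ∧
        c * frob (Fp p δ P) ^ 2 ≤ frob (FA p δ A P) ^ 2 := by
  refine ⟨p - 1, 2, by linarith [hp.1], by linarith [hp.2], fun δ A hδ hA P => ?_⟩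
  have hA0 : 0 < A := by linarith
  have ht := frob_nonneg (symPart P)
  have hlow := approxA_omg_le_deriv_mul hp.1 hδ hA0 ht
  have hup := deriv_mul_le_two_approxA_omg hp.2 hδ hA0 ht
  have hF := sub_one_mul_le_deriv_approxA_omg hp hδ hA0 ht
  rw [frob_FA_sq hp hδ hA0, frob_Fp_sq hδ.le]
  refine ⟨?_, hup, ?_⟩
  · nlinarith [hp.2]
  · nlinarith

end
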